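/- (Corollary: pinching implies positivity of the second-kind curvature.) Let α > 0. If α(‖X‖²‖Y‖² − ⟨X,Y⟩²) ≤ R(X,Y,X,Y) < (n/(n−1)) α (‖X‖²‖Y‖² − ⟨X,Y⟩²) for all linearly independent X,Y ∈ E, then Q̊(φ) > 0 for every nonzero traceless symmetric bilinear form φ on E. If instead α(‖X‖²‖Y‖² − ⟨X,Y⟩²) ≤ R(X,Y,X,Y) ≤ (n/(n−1)) α (‖X‖²‖Y‖² − ⟨X,Y⟩²) for all X,Y ∈ E, then Q̊(φ) ≥ 0 for every traceless symmetric bilinear form φ on E. -/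

import Mathlib

open scoped RealInnerProductSpace

/-!
Diagonalise `φ` in an orthonormal basis `(f i)` with eigenvalues `μ i`. The term
`Q̊(φ) = ∑ i j, R̊(φ)(e i, e j) φ(e i, e j)` does not depend on the orthonormal basis, and in `f`
it equals `-∑ i k, sec(f i, f k) μ i μ k` with `sec` the sectional curvature. As `∑ μ i = 0`,
splitting `sec = Cα - (Cα - sec)` with `C = n/(n-1)` gives `Cα ∑ μ i²` from the first part, while
`0 ≤ Cα - sec ≤ α/(n-1)` and `(∑ |μ i|)² ≤ n ∑ μ i²` bound the second part by `α ∑ μ i²`.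
Hence `Q̊(φ) ≥ α/(n-1) ‖φ‖²`.
-/

namespace OrthonormalBasis

variable {ι κ E : Type*} [Fintype ι] [Fintype κ] [NormedAddCommGroup E] [InnerProductSpace ℝ E]

theorem sum_apply_mul_inner (b : OrthonormalBasis ι ℝ E) (ψ : E →ₗ[ℝ] ℝ) (v : E) :
    ∑ i, ψ (b i) * ⟪b i, v⟫ = ψ v := by
  conv_rhs => rw [← b.sum_repr' v]
  simp [mul_comm]

theorem sum_apply_mul_apply_eq (b : OrthonormalBasis ι ℝ E) (f : OrthonormalBasis κ ℝ E)
    (ψ₁ ψ₂ : E →ₗ[ℝ] ℝ) :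
    ∑ i, ψ₁ (b i) * ψ₂ (b i) = ∑ p, ψ₁ (f p) * ψ₂ (f p) := by
  calc ∑ i, ψ₁ (b i) * ψ₂ (b i) = ∑ i, ψ₁ (b i) * ∑ p, ψ₂ (f p) * ⟪f p, b i⟫ := by
        simp only [f.sum_apply_mul_inner]
    _ = ∑ p, ψ₂ (f p) * ∑ i, ψ₁ (b i) * ⟪b i, f p⟫ := by
        simp only [Finset.mul_sum]
        rw [Finset.sum_comm]
        refine Finset.sum_congr rfl fun p _ => Finset.sum_congr rfl fun i _ => ?_
        rw [real_inner_comm]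
        ring
    _ = ∑ p, ψ₁ (f p) * ψ₂ (f p) := by
        simp only [b.sum_apply_mul_inner]
        exact Finset.sum_congr rfl fun p _ => mul_comm _ _

theorem sum_sum_apply_mul_apply_eq (b : OrthonormalBasis ι ℝ E) (f : OrthonormalBasis κ ℝ E)
    (β γ : E →ₗ[ℝ] E →ₗ[ℝ] ℝ) :
    ∑ i, ∑ j, β (b i) (b j) * γ (b i) (b j) = ∑ p, ∑ q, β (f p) (f q) * γ (f p) (f q) := by
  calc ∑ i, ∑ j, β (b i) (b j) * γ (b i) (b j)
      = ∑ i, ∑ q, β (b i) (f q) * γ (b i) (f q) :=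
        Finset.sum_congr rfl fun i _ => sum_apply_mul_apply_eq b f (β (b i)) (γ (b i))
    _ = ∑ q, ∑ i, β.flip (f q) (b i) * γ.flip (f q) (b i) := Finset.sum_comm
    _ = ∑ q, ∑ p, β.flip (f q) (f p) * γ.flip (f q) (f p) :=
        Finset.sum_congr rfl fun q _ => sum_apply_mul_apply_eq b f (β.flip (f q)) (γ.flip (f q))
    _ = ∑ p, ∑ q, β (f p) (f q) * γ (f p) (f q) := Finset.sum_comm

theorem sum_sum_inner_mul_apply (b : OrthonormalBasis ι ℝ E) (β : E →ₗ[ℝ] E →ₗ[ℝ] ℝ) :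
    ∑ i, ∑ j, ⟪b i, b j⟫ * β (b i) (b j) = ∑ i, β (b i) (b i) := by
  classical
  simp [orthonormal_iff_ite.mp b.orthonormal, ite_mul]

theorem sum_apply_self_eq (b : OrthonormalBasis ι ℝ E) (f : OrthonormalBasis κ ℝ E)
    (β : E →ₗ[ℝ] E →ₗ[ℝ] ℝ) : ∑ i, β (b i) (b i) = ∑ p, β (f p) (f p) := by
  rw [← sum_sum_inner_mul_apply, ← sum_sum_inner_mul_apply]
  exact sum_sum_apply_mul_apply_eq b f (innerₗ E) β

theorem sum_sum_mul_apply_of_apply_eq_ite [DecidableEq ι] (b : OrthonormalBasis ι ℝ E)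
    (β φ : E →ₗ[ℝ] E →ₗ[ℝ] ℝ) {μ : ι → ℝ}
    (hφ : ∀ i j, φ (b i) (b j) = if i = j then μ i else 0) :
    ∑ i, ∑ j, β (b i) (b j) * φ (b i) (b j) = ∑ i, β (b i) (b i) * μ i := by
  simp [hφ]

end OrthonormalBasis

section

variable {ι E : Type*} [Fintype ι] [NormedAddCommGroup E] [InnerProductSpace ℝ E]

theorem exists_orthonormalBasis_apply_eq_ite [FiniteDimensional ℝ E] {n : ℕ}
    (hn : Module.finrank ℝ E = n) (φ : E →ₗ[ℝ] E →ₗ[ℝ] ℝ) (hφ : ∀ x y, φ x y = φ y x) :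
    ∃ (f : OrthonormalBasis (Fin n) ℝ E) (μ : Fin n → ℝ),
      ∀ p q, φ (f p) (f q) = if p = q then μ p else 0 := by
  let b := stdOrthonormalBasis ℝ E
  let A : E →ₗ[ℝ] E := ∑ l, (φ.flip (b l)).smulRight (b l)
  have hA : ∀ x y, ⟪A x, y⟫ = φ x y := fun x y => by
    simpa [A, sum_inner, real_inner_smul_left] using b.sum_apply_mul_inner (φ x) y
  have hAsym : A.IsSymmetric := fun x y => by rw [hA, hφ, ← hA, real_inner_comm]
  refine ⟨hAsym.eigenvectorBasis hn, hAsym.eigenvalues hn, fun p q => ?_⟩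
  rw [← hA, hAsym.apply_eigenvectorBasis, real_inner_smul_left,
    orthonormal_iff_ite.mp (hAsym.eigenvectorBasis hn).orthonormal]
  simp

/-- `R̊(φ)(x, y) = ∑ k l, R(x, b k, b l, y) φ(b k, b l)`, so that `Q̊(φ) = ⟪R̊(φ), φ⟫`. -/
noncomputable def curvatureOperatorSecondKind (R : E →ₗ[ℝ] E →ₗ[ℝ] E →ₗ[ℝ] E →ₗ[ℝ] ℝ)
    (b : OrthonormalBasis ι ℝ E) (φ : E →ₗ[ℝ] E →ₗ[ℝ] ℝ) : E →ₗ[ℝ] E →ₗ[ℝ] ℝ :=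
  ∑ k, ∑ l, φ (b k) (b l) • (R.flip (b k)).flip (b l)

section SecondKind

variable (R : E →ₗ[ℝ] E →ₗ[ℝ] E →ₗ[ℝ] E →ₗ[ℝ] ℝ) (φ : E →ₗ[ℝ] E →ₗ[ℝ] ℝ)

theorem curvatureOperatorSecondKind_apply (b : OrthonormalBasis ι ℝ E) (x y : E) :
    curvatureOperatorSecondKind R b φ x y = ∑ k, ∑ l, φ (b k) (b l) * R x (b k) (b l) y := by
  simp [curvatureOperatorSecondKind, LinearMap.sum_apply]

theorem curvatureOperatorSecondKind_eq {κ : Type*} [Fintype κ] (b : OrthonormalBasis ι ℝ E)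
    (f : OrthonormalBasis κ ℝ E) :
    curvatureOperatorSecondKind R b φ = curvatureOperatorSecondKind R f φ := by
  ext x y
  simp only [curvatureOperatorSecondKind_apply]
  exact b.sum_sum_apply_mul_apply_eq f φ ((R x).compr₂ (LinearMap.applyₗ y))

theorem curvatureOperatorSecondKind_apply_of_apply_eq_ite [DecidableEq ι]
    (f : OrthonormalBasis ι ℝ E) {μ : ι → ℝ} (hφ : ∀ p q, φ (f p) (f q) = if p = q then μ p else 0)
    (x y : E) : curvatureOperatorSecondKind R f φ x y = ∑ k, μ k * R x (f k) (f k) y := by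
  simp [curvatureOperatorSecondKind_apply, hφ, ite_mul]

theorem sum_sum_sum_sum_eq_sum_sum_curvatureOperatorSecondKind (b : OrthonormalBasis ι ℝ E) :
    ∑ i, ∑ j, ∑ k, ∑ l, R (b i) (b k) (b l) (b j) * φ (b k) (b l) * φ (b i) (b j) =
      ∑ i, ∑ j, curvatureOperatorSecondKind R b φ (b i) (b j) * φ (b i) (b j) := by
  simp only [curvatureOperatorSecondKind_apply, Finset.sum_mul, mul_comm (φ _ _) (R _ _ _ _)]

end SecondKind

theorem le_neg_sum_sum_mul_of_sum_eq_zero {α K : ℝ} (hαK : α ≤ K)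
    (S : ι → ι → ℝ) (hdiag : ∀ i, S i i = 0) (hS : ∀ i k, i ≠ k → α ≤ S i k ∧ S i k ≤ K)
    (μ : ι → ℝ) (hμ : ∑ i, μ i = 0) :
    (K - (Fintype.card ι - 1) * (K - α)) * ∑ i, μ i ^ 2 ≤ -∑ i, ∑ k, S i k * (μ i * μ k) := by
  classical
  -- the `if` term makes this an equality on the diagonal;
  -- off it, `(K - S i k) μ i μ k ≥ -(K - α) |μ i| |μ k|`
  have pointwise : ∀ i k, -K * (μ i * μ k) - (K - α) * (|μ i| * |μ k|)
      + (if i = k then (2 * K - α) * μ i ^ 2 else 0) ≤ -(S i k * (μ i * μ k)) := by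
    intro i k
    rcases eq_or_ne i k with rfl | hik
    · rw [if_pos rfl, hdiag, abs_mul_abs_self]
      linarith
    · obtain ⟨hα, hK⟩ := hS i k hik
      have hlow : -(|μ i| * |μ k|) ≤ μ i * μ k := by rw [← abs_mul]; exact neg_abs_le _
      rw [if_neg hik]
      nlinarith [mul_nonneg (sub_nonneg.2 hK) (neg_le_iff_add_nonneg.1 hlow),
        mul_nonneg (sub_nonneg.2 hα) (mul_nonneg (abs_nonneg (μ i)) (abs_nonneg (μ k)))]
  have hsum : ∑ i, ∑ k, (-K * (μ i * μ k) - (K - α) * (|μ i| * |μ k|)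
      + (if i = k then (2 * K - α) * μ i ^ 2 else 0)) =
      -K * (∑ i, μ i) ^ 2 - (K - α) * (∑ i, |μ i|) ^ 2 + (2 * K - α) * ∑ i, μ i ^ 2 := by
    simp only [Finset.sum_add_distrib, Finset.sum_sub_distrib, Finset.sum_ite_eq,
      Finset.mem_univ, if_true, ← Finset.mul_sum, sq, Fintype.sum_mul_sum]
  have hcs : (∑ i, |μ i|) ^ 2 ≤ Fintype.card ι * ∑ i, μ i ^ 2 := by
    simpa using sq_sum_le_card_mul_sum_sq (s := Finset.univ) (f := fun i => |μ i|)
  have hle := Finset.sum_le_sum fun i (_ : i ∈ Finset.univ) =>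
    Finset.sum_le_sum fun k (_ : k ∈ Finset.univ) => pointwise i k
  simp only [Finset.sum_neg_distrib] at hle
  rw [hsum, hμ] at hle
  nlinarith [mul_le_mul_of_nonneg_left hcs (sub_nonneg.2 hαK)]

theorem sum_sum_apply_sq_pos (b : Module.Basis ι ℝ E) {φ : E →ₗ[ℝ] E →ₗ[ℝ] ℝ} (hφ : φ ≠ 0) :
    0 < ∑ i, ∑ j, φ (b i) (b j) ^ 2 := by
  refine lt_of_le_of_ne (by positivity) fun h => hφ (LinearMap.ext_basis b b fun i j => ?_)
  have hi := (Finset.sum_eq_zero_iff_of_nonneg fun i _ => by positivity).1 h.symm i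
    (Finset.mem_univ i)
  simpa using (Finset.sum_eq_zero_iff_of_nonneg fun j _ => by positivity).1 hi j
    (Finset.mem_univ j)

theorem div_mul_sum_sum_sq_le_of_pinched {n : ℕ} (hn : 2 ≤ n) (e : OrthonormalBasis (Fin n) ℝ E)
    (R : E →ₗ[ℝ] E →ₗ[ℝ] E →ₗ[ℝ] E →ₗ[ℝ] ℝ) (hR : ∀ X Y Z W : E, R X Y Z W = - R X Y W Z)
    {α : ℝ} (hα : 0 ≤ α)
    (hpinch : ∀ X Y : E, Orthonormal ℝ ![X, Y] →
      α ≤ R X Y X Y ∧ R X Y X Y ≤ ((n : ℝ) / ((n : ℝ) - 1)) * α)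
    (φ : E →ₗ[ℝ] E →ₗ[ℝ] ℝ) (hφ : ∀ X Y : E, φ X Y = φ Y X) (htr : ∑ i, φ (e i) (e i) = 0) :
    α / ((n : ℝ) - 1) * ∑ i, ∑ j, φ (e i) (e j) ^ 2 ≤
      ∑ i, ∑ j, ∑ k, ∑ l, R (e i) (e k) (e l) (e j) * φ (e k) (e l) * φ (e i) (e j) := by
  have : FiniteDimensional ℝ E := Module.Finite.of_basis e.toBasis
  obtain ⟨f, μ, hf⟩ := exists_orthonormalBasis_apply_eq_ite
    (by simpa using Module.finrank_eq_card_basis e.toBasis) φ hφ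
  set S : Fin n → Fin n → ℝ := fun i k => R (f i) (f k) (f i) (f k)
  have hQ : ∑ i, ∑ j, ∑ k, ∑ l, R (e i) (e k) (e l) (e j) * φ (e k) (e l) * φ (e i) (e j) =
      -∑ i, ∑ k, S i k * (μ i * μ k) := by
    rw [sum_sum_sum_sum_eq_sum_sum_curvatureOperatorSecondKind,
      curvatureOperatorSecondKind_eq R φ e f, e.sum_sum_apply_mul_apply_eq f,
      f.sum_sum_mul_apply_of_apply_eq_ite _ _ hf]
    simp only [curvatureOperatorSecondKind_apply_of_apply_eq_ite R φ f hf, Finset.sum_mul,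
      ← Finset.sum_neg_distrib]
    refine Finset.sum_congr rfl fun i _ => Finset.sum_congr rfl fun k _ => ?_
    rw [hR (f i) (f k) (f k) (f i)]
    ring
  have hnorm : ∑ i, ∑ j, φ (e i) (e j) ^ 2 = ∑ i, μ i ^ 2 := by
    simp only [sq, e.sum_sum_apply_mul_apply_eq f, f.sum_sum_mul_apply_of_apply_eq_ite _ _ hf]
    simp [hf]
  have htrμ : ∑ i, μ i = 0 := by
    rw [← htr, e.sum_apply_self_eq f φ]
    simp [hf]
  have hdiag : ∀ i, S i i = 0 := fun i => by
    have := hR (f i) (f i) (f i) (f i)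
    simp only [S]
    linarith
  have hS : ∀ i k, i ≠ k → α ≤ S i k ∧ S i k ≤ (n : ℝ) / ((n : ℝ) - 1) * α :=
    fun i k hik => hpinch _ _ (by simpa using f.orthonormal.2 hik)
  have hn1 : (0 : ℝ) < (n : ℝ) - 1 := by
    have : (2 : ℝ) ≤ n := by exact_mod_cast hn
    linarith
  have hαK : α ≤ (n : ℝ) / ((n : ℝ) - 1) * α := by
    rw [div_mul_eq_mul_div, le_div_iff₀ hn1]
    nlinarith
  have hcoef : (n : ℝ) / ((n : ℝ) - 1) * α - (Fintype.card (Fin n) - 1) *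
      ((n : ℝ) / ((n : ℝ) - 1) * α - α) = α / ((n : ℝ) - 1) := by
    rw [Fintype.card_fin]
    field_simp
    ring
  rw [hQ, hnorm, ← hcoef]
  exact le_neg_sum_sum_mul_of_sum_eq_zero hαK S hdiag hS μ htrμ

end

theorem stmt_5_general
    {E : Type*} [NormedAddCommGroup E] [InnerProductSpace ℝ E]
    {n : ℕ} (hn : 2 ≤ n) (e : OrthonormalBasis (Fin n) ℝ E)
    (R : E →ₗ[ℝ] E →ₗ[ℝ] E →ₗ[ℝ] E →ₗ[ℝ] ℝ)
    (hR2 : ∀ X Y Z W : E, R X Y Z W = - R X Y W Z)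
    (α : ℝ) (hα : 0 < α) :
    ((∀ X Y : E, LinearIndependent ℝ ![X, Y] →
        α * (‖X‖ ^ 2 * ‖Y‖ ^ 2 - ⟪X, Y⟫ ^ 2) ≤ R X Y X Y ∧
        R X Y X Y < ((n : ℝ) / ((n : ℝ) - 1)) * α * (‖X‖ ^ 2 * ‖Y‖ ^ 2 - ⟪X, Y⟫ ^ 2)) →
      ∀ φ : E →ₗ[ℝ] E →ₗ[ℝ] ℝ, (∀ X Y : E, φ X Y = φ Y X) →
        (∑ i, φ (e i) (e i)) = 0 → φ ≠ 0 →
        0 < ∑ i, ∑ j, ∑ k, ∑ l, R (e i) (e k) (e l) (e j) * φ (e k) (e l) * φ (e i) (e j)) ∧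
    ((∀ X Y : E,
        α * (‖X‖ ^ 2 * ‖Y‖ ^ 2 - ⟪X, Y⟫ ^ 2) ≤ R X Y X Y ∧
        R X Y X Y ≤ ((n : ℝ) / ((n : ℝ) - 1)) * α * (‖X‖ ^ 2 * ‖Y‖ ^ 2 - ⟪X, Y⟫ ^ 2)) →
      ∀ φ : E →ₗ[ℝ] E →ₗ[ℝ] ℝ, (∀ X Y : E, φ X Y = φ Y X) →
        (∑ i, φ (e i) (e i)) = 0 →
        0 ≤ ∑ i, ∑ j, ∑ k, ∑ l, R (e i) (e k) (e l) (e j) * φ (e k) (e l) * φ (e i) (e j)) := by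
  have gram : ∀ X Y : E, Orthonormal ℝ ![X, Y] → ‖X‖ ^ 2 * ‖Y‖ ^ 2 - ⟪X, Y⟫ ^ 2 = 1 :=
    fun X Y h => by
      rw [show ‖X‖ = 1 from h.1 0, show ‖Y‖ = 1 from h.1 1, show ⟪X, Y⟫ = 0 from h.2 zero_ne_one]
      norm_num
  have hn1 : (0 : ℝ) < (n : ℝ) - 1 := by
    have : (2 : ℝ) ≤ n := by exact_mod_cast hn
    linarith
  refine ⟨fun hpinch φ hφ htr hφ0 => ?_, fun hpinch φ hφ htr => ?_⟩
  · refine lt_of_lt_of_le ?_ (div_mul_sum_sum_sq_le_of_pinched hn e R hR2 hα.le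
      (fun X Y h => ?_) φ hφ htr)
    · refine mul_pos (div_pos hα hn1) ?_
      simpa using sum_sum_apply_sq_pos e.toBasis hφ0
    · have := hpinch X Y h.linearIndependent
      rw [gram X Y h, mul_one, mul_one] at this
      exact ⟨this.1, this.2.le⟩
  · refine le_trans ?_ (div_mul_sum_sum_sq_le_of_pinched hn e R hR2 hα.le
      (fun X Y h => ?_) φ hφ htr)
    · exact mul_nonneg (div_nonneg hα.le hn1.le) (by positivity)
    · have := hpinch X Y
      rwa [gram X Y h, mul_one, mul_one] at this

/-- **pinching implies positivity of the second-kind curvature.**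
Let `α > 0`.  If `α(‖X‖²‖Y‖² − ⟪X,Y⟫²) ≤ R(X,Y,X,Y) < (n/(n−1)) α (‖X‖²‖Y‖² − ⟪X,Y⟫²)`
for all linearly independent `X, Y`, then `Q̊(φ) > 0` for every nonzero traceless
symmetric bilinear form `φ`; if instead the non-strict inequalities hold for all `X, Y`,
then `Q̊(φ) ≥ 0` for every traceless symmetric bilinear form `φ`. -/
theorem stmt_5
    {E : Type*} [NormedAddCommGroup E] [InnerProductSpace ℝ E]
    {n : ℕ} (hn : 2 ≤ n) (e : OrthonormalBasis (Fin n) ℝ E)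
    (R : E →ₗ[ℝ] E →ₗ[ℝ] E →ₗ[ℝ] E →ₗ[ℝ] ℝ)
    (hR1 : ∀ X Y Z W : E, R X Y Z W = - R Y X Z W)
    (hR2 : ∀ X Y Z W : E, R X Y Z W = - R X Y W Z)
    (hR3 : ∀ X Y Z W : E, R X Y Z W = R Z W X Y)
    (hR4 : ∀ X Y Z W : E, R X Y Z W + R Y Z X W + R Z X Y W = 0)
    (α : ℝ) (hα : 0 < α) :
    ((∀ X Y : E, LinearIndependent ℝ ![X, Y] →
        α * (‖X‖ ^ 2 * ‖Y‖ ^ 2 - ⟪X, Y⟫ ^ 2) ≤ R X Y X Y ∧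
        R X Y X Y < ((n : ℝ) / ((n : ℝ) - 1)) * α * (‖X‖ ^ 2 * ‖Y‖ ^ 2 - ⟪X, Y⟫ ^ 2)) →
      ∀ φ : E →ₗ[ℝ] E →ₗ[ℝ] ℝ, (∀ X Y : E, φ X Y = φ Y X) →
        (∑ i, φ (e i) (e i)) = 0 → φ ≠ 0 →
        0 < ∑ i, ∑ j, ∑ k, ∑ l, R (e i) (e k) (e l) (e j) * φ (e k) (e l) * φ (e i) (e j)) ∧
    ((∀ X Y : E,
        α * (‖X‖ ^ 2 * ‖Y‖ ^ 2 - ⟪X, Y⟫ ^ 2) ≤ R X Y X Y ∧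
        R X Y X Y ≤ ((n : ℝ) / ((n : ℝ) - 1)) * α * (‖X‖ ^ 2 * ‖Y‖ ^ 2 - ⟪X, Y⟫ ^ 2)) →
      ∀ φ : E →ₗ[ℝ] E →ₗ[ℝ] ℝ, (∀ X Y : E, φ X Y = φ Y X) →
        (∑ i, φ (e i) (e i)) = 0 →
        0 ≤ ∑ i, ∑ j, ∑ k, ∑ l, R (e i) (e k) (e l) (e j) * φ (e k) (e l) * φ (e i) (e j)) :=
  stmt_5_general hn e R hR2 α hα
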